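/- Let (M,M') be a matroid perspective on a finite totally ordered ground set E, let B be independent in M and spanning in M', and let X = (B \ Int_{M'}(B)) ∪ Ext_M(B). Then the set Ext_M(B) is a basis of (M|X)*. -/

import Mathlib

open Matroid Set
open scoped Classical

variable {α : Type*}

/-- A circuit of a matroid: a minimal dependent set. -/
def Circ (M : Matroid α) (C : Set α) : Prop := Minimal M.Dep C

/-- Contraction of a set `X` in a matroid `M`, defined via duality and restriction. -/
def mcon (M : Matroid α) (X : Set α) : Matroid α := (M✶ ↾ (M✶.E \ X))✶

/-- The rank of a matroid: the (common) cardinality of its bases. -/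
noncomputable def rkN (M : Matroid α) : ℕ := sSup (Set.ncard '' {B | M.IsBase B})

/-- The rank of a set `X` in a matroid `M`. -/
noncomputable def rset (M : Matroid α) (X : Set α) : ℕ := rkN (M ↾ X)

/-- `e` is the minimal element of the set `C`. -/
def IsMinOf [LinearOrder α] (e : α) (C : Set α) : Prop := e ∈ C ∧ ∀ f ∈ C, e ≤ f

/-- `e` is externally active in `M` with respect to `X`. -/
def ExtAct [LinearOrder α] (M : Matroid α) (X : Set α) (e : α) : Prop :=
  e ∈ M.E \ X ∧ ∃ C, Circ M C ∧ C ⊆ insert e X ∧ IsMinOf e C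

/-- `e` is internally active in `M'` with respect to `X`. -/
def IntAct [LinearOrder α] (M' : Matroid α) (X : Set α) (e : α) : Prop :=
  e ∈ X ∧ ∃ C, Circ (M'✶) C ∧ C ⊆ insert e (M'.E \ X) ∧ IsMinOf e C

/-- The set `Ext_M(X)` of externally active elements. -/
def ExtSet [LinearOrder α] (M : Matroid α) (X : Set α) : Set α := {e | ExtAct M X e}

/-- The set `Int_{M'}(X)` of internally active elements. -/
def IntSet [LinearOrder α] (M' : Matroid α) (X : Set α) : Set α := {e | IntAct M' X e}

/-- `Y` is `(M,<)`-compatible: no `M`-circuit `C` satisfies `Y ∩ C = {min C}`. -/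
def Compat [LinearOrder α] (M : Matroid α) (Y : Set α) : Prop :=
  ¬ ∃ C e, Circ M C ∧ IsMinOf e C ∧ Y ∩ C = {e}

/-- `(M, M')` is a matroid perspective: same ground set, and every circuit of `M`
is a union of circuits of `M'` (equivalently, every point of an `M`-circuit `C` lies in
an `M'`-circuit contained in `C`). -/
def Perspective (M M' : Matroid α) : Prop :=
  M.E = M'.E ∧ ∀ C, Circ M C → ∀ x ∈ C, ∃ C', Circ M' C' ∧ C' ⊆ C ∧ x ∈ C'

/-- `A` is lexicographically smaller than `B` (at the minimal element where they differ). -/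
def LexLT [LinearOrder α] (A B : Set α) : Prop :=
  ∃ e, e ∈ A ∧ e ∉ B ∧ ∀ f, f < e → (f ∈ A ↔ f ∈ B)

/-- `B` is the lexicographically minimal basis of `M`. -/
def MinBasis [LinearOrder α] (M : Matroid α) (B : Set α) : Prop :=
  M.IsBase B ∧ ∀ B', M.IsBase B' → ¬ LexLT B' B

/-- The collection `D(M, M', <)` of compatible sets of a matroid perspective. -/
def DSet [LinearOrder α] (M M' : Matroid α) : Set (Set α) :=
  {X | X ⊆ M.E ∧ Compat (M'✶) X ∧ Compat M (M.E \ X)}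

lemma Circ.dep' {M : Matroid α} {C : Set α} (h : Circ M C) : M.Dep C := h.1

/-- Removing an element from a circuit gives an independent set. -/
lemma Circ.diff_singleton_indep {M : Matroid α} {C : Set α} (h : Circ M C) {x : α}
    (hx : x ∈ C) : M.Indep (C \ {x}) := by
  rw [← Matroid.not_dep_iff (diff_subset.trans h.dep'.subset_ground)]
  intro hdep
  exact (h.2 hdep diff_subset hx).2 rfl

/-- The complement of a cocircuit is closure-fixed. -/
lemma cocirc_compl_closure {N : Matroid α} {D : Set α} (hD : Circ (N✶) D) :
    N.closure (N.E \ D) = N.E \ D := by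
  have hDE : D ⊆ N.E := hD.dep'.subset_ground
  refine subset_antisymm (fun x hx => ?_) (N.subset_closure _ diff_subset)
  have hxE : x ∈ N.E := N.closure_subset_ground _ hx
  refine ⟨hxE, fun hxD => ?_⟩
  have hco : N.Coindep (D \ {x}) := Circ.diff_singleton_indep (M := N✶) hD hxD
  have hsp : N.Spanning (N.E \ (D \ {x})) := hco.compl_spanning
  have heq : N.E \ (D \ {x}) = insert x (N.E \ D) := by
    ext y
    by_cases hyx : y = x
    · subst hyx; simp [hxE, hxD]
    · simp only [Set.mem_diff, Set.mem_insert_iff, Set.mem_singleton_iff, hyx,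
        or_false, false_or]
      tauto
  rw [heq, Matroid.spanning_iff_closure_eq] at hsp
  have hcl : N.closure (insert x (N.E \ D)) = N.closure (N.E \ D) := by
    rw [← Matroid.closure_insert_closure_eq_closure_insert,
      Set.insert_eq_of_mem hx, N.closure_closure]
  rw [hcl] at hsp
  have hsp' : N.Spanning (N.E \ D) := by
    rw [Matroid.spanning_iff_closure_eq]; exact hsp
  have : N.Coindep D := (Matroid.coindep_iff_compl_spanning hDE).2 hsp'
  exact hD.dep'.not_indep this

/-- A circuit and a cocircuit never meet in exactly one element. -/
lemma circ_cocirc_inter {N : Matroid α} {C D : Set α} (hC : Circ N C) (hD : Circ (N✶) D)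
    {f : α} (hfC : f ∈ C) (hfD : f ∈ D) : ∃ g, g ∈ C ∧ g ∈ D ∧ g ≠ f := by
  by_contra h
  push_neg at h
  have hsub : C \ {f} ⊆ N.E \ D := by
    rintro x ⟨hxC, hxf⟩
    exact ⟨hC.dep'.subset_ground hxC, fun hxD => hxf (h x hxC hxD)⟩
  have hind : N.Indep (C \ {f}) := hC.diff_singleton_indep hfC
  have hfcl : f ∈ N.closure (C \ {f}) := by
    rw [hind.mem_closure_iff]
    left
    rw [Set.insert_diff_singleton, Set.insert_eq_of_mem hfC]
    exact hC.dep'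
  have hmem : f ∈ N.E \ D := by
    have h2 := N.closure_subset_closure hsub hfcl
    rwa [cocirc_compl_closure hD] at h2
  exact hmem.2 hfD

/-- Key: an externally active witness circuit avoids internally active elements. -/
lemma circ_avoids_int [LinearOrder α] {M M' : Matroid α} (hP : Perspective M M')
    {B C : Set α} {e : α} (hC : Circ M C) (hCB : C ⊆ insert e B) (hmin : IsMinOf e C)
    (heB : e ∉ B) {f : α} (hfC : f ∈ C) (hfe : f ≠ e) : ¬ IntAct M' B f := by
  rintro ⟨hfB, D, hD, hDsub, hDmin⟩
  obtain ⟨C', hC', hC'C, hfC'⟩ := hP.2 C hC f hfC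
  obtain ⟨g, hgC', hgD, hgf⟩ := circ_cocirc_inter hC' hD hfC' hDmin.1
  have hgCB : g ∈ insert e B := hCB (hC'C hgC')
  have hge : g = e := by
    rcases hgCB with h | hgB
    · exact h
    · rcases hDsub hgD with h | hg
      · exact absurd h hgf
      · exact absurd hgB hg.2
  subst hge
  have h1 : f ≤ g := hDmin.2 g hgD
  have h2 : g ≤ f := hmin.2 f hfC
  exact hfe (le_antisymm h1 h2)

/-- For `B` independent in `M` and spanning in `M'`, with
`X = (B \ Int_{M'}(B)) ∪ Ext_M(B)`, the set `Ext_M(B)` is a basis of `(M|X)✶`. -/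
theorem ext_base_dual_restrict [Fintype α] [LinearOrder α] (M M' : Matroid α)
    (hP : Perspective M M') (B : Set α) (hBi : M.Indep B) (hBs : M'.Spanning B) :
    ((M ↾ ((B \ IntSet M' B) ∪ ExtSet M B))✶).IsBase (ExtSet M B) := by
  set Int := IntSet M' B with hInt
  set Ext := ExtSet M B with hExt
  set X : Set α := (B \ Int) ∪ Ext with hX
  have hBE : B ⊆ M.E := hBi.subset_ground
  have hExtE : Ext ⊆ M.E \ B := fun e he => he.1
  have hXE : X ⊆ M.E := Set.union_subset (diff_subset.trans hBE) (fun e he => (hExtE he).1)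
  have hIindep : M.Indep (B \ Int) := hBi.subset diff_subset
  -- X \ Ext = B \ Int
  have hdisj : Disjoint (B \ Int) Ext := by
    refine Set.disjoint_left.2 fun x hx hxE => (hExtE hxE).2 hx.1
  have hXdiff : X \ Ext = B \ Int := by
    rw [hX, Set.union_diff_right, hdisj.sdiff_eq_left]
  -- closure condition
  have hclos : X ⊆ M.closure (B \ Int) := by
    rintro x (hx | hx)
    · exact M.subset_closure _ (diff_subset.trans hBE) hx
    · obtain ⟨⟨hxE, hxB⟩, C, hC, hCsub, hmin⟩ := hx
      have hCsub' : C ⊆ insert x (B \ Int) := by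
        intro f hf
        by_cases hfx : f = x
        · exact hfx ▸ Set.mem_insert _ _
        · rcases hCsub hf with h | hfB
          · exact absurd h hfx
          · exact Set.mem_insert_of_mem _
              ⟨hfB, circ_avoids_int hP hC hCsub hmin hxB hf hfx⟩
      rw [hIindep.mem_closure_iff]
      left
      exact hC.dep'.superset hCsub'
        (Set.insert_subset hxE (diff_subset.trans hBE))
  have hbasis : M.IsBasis (B \ Int) X :=
    hIindep.isBasis_of_subset_of_subset_closure Set.subset_union_left hclos
  have hbase : (M ↾ X).IsBase (B \ Int) := hbasis.restrict_isBase
  rw [Matroid.dual_isBase_iff']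
  constructor
  · rw [Matroid.restrict_ground_eq, hXdiff]
    exact (Matroid.isBase_restrict_iff hXE).2 hbasis
  · rw [Matroid.restrict_ground_eq]
    exact Set.subset_union_right
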